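/- arXiv:2208.13502 — 4 statements merged into one kernel-verified Lean document; each statement's English description precedes it below -/
import Mathlib

section
/- Let a, b, c > 0 and define the cubic polynomial p(λ) = λ³ − bλ² − (a+c)λ + cb. Then p has three distinct real roots λ₀, λ₁, λ₂ satisfying λ₀ > max(b, √c), λ₁ < −√c, and 0 < λ₂ < min(b, √c). -/
set_option maxHeartbeats 800000 in
theorem cubic_three_roots (a b c : ℝ) (ha : 0 < a) (hb : 0 < b) (hc : 0 < c) :
    ∃ l0 l1 l2 : ℝ,
      (l0 ^ 3 - b * l0 ^ 2 - (a + c) * l0 + c * b = 0) ∧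
      (l1 ^ 3 - b * l1 ^ 2 - (a + c) * l1 + c * b = 0) ∧
      (l2 ^ 3 - b * l2 ^ 2 - (a + c) * l2 + c * b = 0) ∧
      l0 ≠ l1 ∧ l0 ≠ l2 ∧ l1 ≠ l2 ∧
      l0 > max b (Real.sqrt c) ∧
      l1 < -Real.sqrt c ∧
      0 < l2 ∧ l2 < min b (Real.sqrt c) := by
  set s := Real.sqrt c with hsdef
  have hs0 : 0 < s := Real.sqrt_pos.mpr hc
  have hs2 : s ^ 2 = c := Real.sq_sqrt hc.le
  set f : ℝ → ℝ := fun x => x ^ 3 - b * x ^ 2 - (a + c) * x + c * b with hfdef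
  have hcont : Continuous f := by
    apply Continuous.add
    · apply Continuous.sub
      · exact (continuous_pow 3).sub (continuous_const.mul (continuous_pow 2))
      · exact continuous_const.mul continuous_id
    · exact continuous_const
  have hf0 : f 0 = c * b := by simp [hfdef]
  have hfb : f b = -(a * b) := by simp only [hfdef]; ring
  have hfs : f s = -(a * s) := by
    simp only [hfdef]
    have : s ^ 3 = c * s := by nlinarith [hs2]
    nlinarith [hs2, this]
  have hfns : f (-s) = a * s := by
    simp only [hfdef]
    have : s ^ 3 = c * s := by nlinarith [hs2]
    nlinarith [hs2, this]
  set K : ℝ := 1 + b + a + c + c * b with hKdef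
  have hK1 : (1 : ℝ) ≤ K := by nlinarith [mul_pos hc hb]
  have hsK : s ≤ K := by nlinarith [sq_nonneg (s - 1), mul_pos hc hb]
  have hbK : b < K := by nlinarith [mul_pos hc hb]
  have hKpos : 0 < K := lt_of_lt_of_le one_pos hK1
  have hKsq : K ≤ K ^ 2 := by nlinarith
  have hKK : K * (1 + a + c + c * b) ≤ K ^ 2 := by nlinarith [mul_pos hc hb]
  have hfK : 0 < f K := by
    simp only [hfdef]
    have h2 : K ^ 3 - b * K ^ 2 = K ^ 2 * (1 + a + c + c * b) := by rw [hKdef]; ring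
    have h3 : K * (a + c) ≤ K ^ 2 * (a + c) :=
      mul_le_mul_of_nonneg_right hKsq (by positivity)
    have h4 : c * b ≤ K * (c * b) := le_mul_of_one_le_left (by positivity) hK1
    nlinarith [mul_pos hc hb, mul_pos hKpos (mul_pos hc hb)]
  have hfnK : f (-K) < 0 := by
    simp only [hfdef]
    have h2 : K ^ 2 ≤ K ^ 3 := by nlinarith
    have h4 : c * b ≤ K * (c * b) := le_mul_of_one_le_left (by positivity) hK1
    have h5 : 0 < b * K ^ 2 := by positivity
    nlinarith [mul_pos hc hb]
  set m : ℝ := min b s with hmdef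
  set M : ℝ := max b s with hMdef
  have hm0 : 0 < m := lt_min hb hs0
  have hfm : f m < 0 := by
    rcases min_cases b s with ⟨h, _⟩ | ⟨h, _⟩
    · rw [hmdef, h, hfb]; nlinarith [mul_pos ha hb]
    · rw [hmdef, h, hfs]; nlinarith [mul_pos ha hs0]
  have hfM : f M < 0 := by
    rcases max_cases b s with ⟨h, _⟩ | ⟨h, _⟩
    · rw [hMdef, h, hfb]; nlinarith [mul_pos ha hb]
    · rw [hMdef, h, hfs]; nlinarith [mul_pos ha hs0]
  have hMK : M ≤ K := max_le hbK.le hsK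
  -- root l2 in (0, m)
  obtain ⟨l2, hl2mem, hl2⟩ :=
    intermediate_value_Icc' hm0.le hcont.continuousOn
      (Set.mem_Icc.mpr ⟨hfm.le, by rw [hf0]; positivity⟩)
  -- root l0 in (M, K)
  obtain ⟨l0, hl0mem, hl0⟩ :=
    intermediate_value_Icc hMK hcont.continuousOn
      (Set.mem_Icc.mpr ⟨hfM.le, hfK.le⟩)
  -- root l1 in (-K, -s)
  have hnKs : -K ≤ -s := by linarith
  obtain ⟨l1, hl1mem, hl1⟩ :=
    intermediate_value_Icc hnKs hcont.continuousOn
      (Set.mem_Icc.mpr ⟨hfnK.le, by rw [hfns]; positivity⟩)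
  obtain ⟨hl2a, hl2b⟩ := Set.mem_Icc.mp hl2mem
  obtain ⟨hl0a, hl0b⟩ := Set.mem_Icc.mp hl0mem
  obtain ⟨hl1a, hl1b⟩ := Set.mem_Icc.mp hl1mem
  have hl2pos : 0 < l2 := by
    rcases hl2a.lt_or_eq with h | h
    · exact h
    · exfalso; rw [← h] at hl2; rw [hl2] at hf0; nlinarith [mul_pos hc hb]
  have hl2m : l2 < m := by
    rcases hl2b.lt_or_eq with h | h
    · exact h
    · exfalso; rw [h] at hl2; rw [hl2] at hfm; exact lt_irrefl 0 hfm
  have hl0M : M < l0 := by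
    rcases hl0a.lt_or_eq with h | h
    · exact h
    · exfalso; rw [← h] at hl0; rw [hl0] at hfM; exact lt_irrefl 0 hfM
  have hl1s : l1 < -s := by
    rcases hl1b.lt_or_eq with h | h
    · exact h
    · exfalso; rw [h] at hl1; rw [hl1] at hfns; nlinarith [mul_pos ha hs0]
  have hmM : m ≤ M := min_le_max
  refine ⟨l0, l1, l2, hl0, hl1, hl2, ?_, ?_, ?_, hl0M, hl1s, hl2pos, hl2m⟩
  · apply ne_of_gt; calc l1 < -s := hl1s
      _ < 0 := by linarith
      _ < l2 := hl2pos
      _ < m := hl2m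
      _ ≤ M := hmM
      _ < l0 := hl0M
  · apply ne_of_gt; calc l2 < m := hl2m
      _ ≤ M := hmM
      _ < l0 := hl0M
  · apply ne_of_lt; calc l1 < -s := hl1s
      _ < 0 := by linarith
      _ < l2 := hl2pos
end

section
/- Under the same setting of the 1D temperature system with fluid heat conduction (positive parameters, boundary conditions T_f(0) = T_s(0) = T_b, T_f'(L) = (h_v A)/(c_p ṁ)(T_s(L) − T_f(L)), (1−φ)κ_s T_s'(L) = q − (c_p ṁ/A)(T_s(L)−T_f(L))) with heat flux q > 0, both T_f and T_s are monotonically increasing on [0, L]; in particular T_f(y) ≥ T_b and T_s(y) ≥ T_b for all y ∈ [0, L]. -/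
/-!
Write `W = T_s - T_f`. The fluid equation reads `a T_f'' = m T_f' - h W`, so for every constant
`W₀ ≤ W` the quantity `exp (-m y / a) * (m T_f' - h W₀)` is nonincreasing. If `W` had a negative
minimum `W₀`, it could not be attained at `0` (where `W = 0`), nor at `L` (the boundary conditions
force `W'(L) > 0` there), and at an interior point `W'' ≥ 0` makes `m T_f' - h W₀` negative, while
the boundary condition at `L` makes it nonnegative at `L`. Hence `W ≥ 0`. The same quantity with
`W₀ = 0` carries `T_f'(L) ≥ 0` back to all of `[0, L]`, and `T_s'` is nondecreasing
(`b T_s'' = h W ≥ 0`) with `T_s'(0) ≥ T_f'(0) ≥ 0` because `W` is minimal at `0`.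
-/

open Set Topology

theorem IsLocalMin.deriv_deriv_nonneg {f : ℝ → ℝ} {x : ℝ} (h : IsLocalMin f x)
    (hf : ContinuousAt f x) : 0 ≤ deriv (deriv f) x := by
  by_contra! hneg
  have hconst : f =ᶠ[𝓝 x] fun _ ↦ f x :=
    (h.and (isLocalMax_of_deriv_deriv_neg hneg h.deriv_eq_zero hf)).mono
      fun y hy ↦ le_antisymm hy.2 hy.1
  have : deriv (deriv f) x = 0 := by
    rw [hconst.deriv.deriv_eq]
    simp
  exact hneg.ne this

theorem IsMinOn.deriv_nonneg_left {f : ℝ → ℝ} {a b : ℝ} (h : IsMinOn f (Icc a b) a)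
    (hab : a < b) (hf : DifferentiableAt ℝ f a) : 0 ≤ deriv f a := by
  have := h.localize.hasFDerivWithinAt_nonneg hf.hasDerivAt.hasFDerivAt.hasFDerivWithinAt
    (sub_mem_posTangentConeAt_of_segment_subset (segment_eq_Icc hab.le).subset)
  rw [ContinuousLinearMap.toSpanSingleton_apply, smul_eq_mul] at this
  exact nonneg_of_mul_nonneg_right this (sub_pos.2 hab)

theorem IsMinOn.deriv_nonpos_right {f : ℝ → ℝ} {a b : ℝ} (h : IsMinOn f (Icc a b) b)
    (hab : a < b) (hf : DifferentiableAt ℝ f b) : deriv f b ≤ 0 := by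
  have := h.localize.hasFDerivWithinAt_nonneg hf.hasDerivAt.hasFDerivAt.hasFDerivWithinAt
    (sub_mem_posTangentConeAt_of_segment_subset (by rw [segment_symm, segment_eq_Icc hab.le]))
  rw [ContinuousLinearMap.toSpanSingleton_apply, smul_eq_mul] at this
  exact nonpos_of_mul_nonneg_right this (sub_neg.2 hab)

theorem monotoneOn_of_deriv_nonneg_of_differentiable {f : ℝ → ℝ} {D : Set ℝ}
    (hD : Convex ℝ D) (hf : Differentiable ℝ f) (h : ∀ x ∈ D, 0 ≤ deriv f x) :
    MonotoneOn f D :=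
  monotoneOn_of_deriv_nonneg hD hf.continuous.continuousOn hf.differentiableOn
    fun x hx ↦ h x (interior_subset hx)

theorem antitoneOn_exp_mul_of_deriv_le_mul {u : ℝ → ℝ} {c s t : ℝ}
    (hu : ContinuousOn u (Icc s t)) (hu' : DifferentiableOn ℝ u (Ioo s t))
    (h : ∀ y ∈ Ioo s t, deriv u y ≤ c * u y) :
    AntitoneOn (fun y ↦ Real.exp (-(c * y)) * u y) (Icc s t) := by
  have hexp : ∀ y, HasDerivAt (fun y ↦ Real.exp (-(c * y))) (-c * Real.exp (-(c * y))) y := by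
    intro y
    simpa [mul_comm] using ((hasDerivAt_id y).const_mul c).neg.exp
  refine antitoneOn_of_deriv_nonpos (convex_Icc s t)
    ((Real.continuous_exp.comp (continuous_const.mul continuous_id).neg).continuousOn.mul hu)
    ?_ ?_ <;> rw [interior_Icc]
  · exact fun y hy ↦ ((hexp y).differentiableAt.mul
      (hu'.differentiableAt (Ioo_mem_nhds hy.1 hy.2))).differentiableWithinAt
  · intro y hy
    rw [((hexp y).fun_mul (hu'.differentiableAt (Ioo_mem_nhds hy.1 hy.2)).hasDerivAt).deriv]
    nlinarith [Real.exp_pos (-(c * y)), h y hy]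

/-- The system of the paper with `a = φ κ_f`, `b = (1 - φ) κ_s`, `m = c_p ṁ / A`, `h = h_v`. -/
structure IsTwoTemperatureSolution (a b m h L : ℝ) (Tf Ts : ℝ → ℝ) : Prop where
  contDiff_fluid : ContDiff ℝ 2 Tf
  contDiff_solid : ContDiff ℝ 2 Ts
  ode_fluid : ∀ y ∈ Ioo 0 L, -a * deriv (deriv Tf) y + m * deriv Tf y = h * (Ts y - Tf y)
  ode_solid : ∀ y ∈ Ioo 0 L, b * deriv (deriv Ts) y = h * (Ts y - Tf y)

namespace IsTwoTemperatureSolution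

variable {a b m h L : ℝ} {Tf Ts : ℝ → ℝ}

theorem deriv_solid_sub_fluid (hsol : IsTwoTemperatureSolution a b m h L Tf Ts) :
    deriv (fun y ↦ Ts y - Tf y) = fun y ↦ deriv Ts y - deriv Tf y := by
  ext y
  exact deriv_fun_sub (hsol.contDiff_solid.differentiable two_ne_zero y)
    (hsol.contDiff_fluid.differentiable two_ne_zero y)

theorem fluid_deriv_le_of_isMinOn (hsol : IsTwoTemperatureSolution a b m h L Tf Ts)
    (ha : 0 < a) (hb : 0 < b) {y₀ : ℝ} (hy₀ : y₀ ∈ Ioo 0 L)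
    (hmin : IsMinOn (fun y ↦ Ts y - Tf y) (Icc 0 L) y₀) :
    b * (m * deriv Tf y₀ - h * (Ts y₀ - Tf y₀)) ≤ a * h * (Ts y₀ - Tf y₀) := by
  have hconv : 0 ≤ deriv (deriv Ts) y₀ - deriv (deriv Tf) y₀ := by
    have := (hmin.isLocalMin (Icc_mem_nhds hy₀.1 hy₀.2)).deriv_deriv_nonneg
      (hsol.contDiff_solid.continuous.sub hsol.contDiff_fluid.continuous).continuousAt
    rwa [hsol.deriv_solid_sub_fluid, deriv_fun_sub (hsol.contDiff_solid.differentiable_deriv_two y₀)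
      (hsol.contDiff_fluid.differentiable_deriv_two y₀)] at this
  have hf := hsol.ode_fluid y₀ hy₀
  have hs := hsol.ode_solid y₀ hy₀
  nlinarith [mul_nonneg (mul_pos ha hb).le hconv]

theorem antitoneOn_exp_mul_fluid_deriv (hsol : IsTwoTemperatureSolution a b m h L Tf Ts)
    (ha : 0 < a) (hm : 0 < m) (hh : 0 < h) {s W₀ : ℝ} (hs : 0 ≤ s)
    (hW : ∀ y ∈ Ioo s L, W₀ ≤ Ts y - Tf y) :
    AntitoneOn (fun y ↦ Real.exp (-(m / a * y)) * (m * deriv Tf y - h * W₀)) (Icc s L) := by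
  have hTf' := hsol.contDiff_fluid.differentiable_deriv_two
  refine antitoneOn_exp_mul_of_deriv_le_mul
    ((continuous_const.mul hTf'.continuous).sub continuous_const).continuousOn
    ((hTf'.const_mul m).sub_const _).differentiableOn fun y hy ↦ ?_
  have hy' : y ∈ Ioo 0 L := ⟨hs.trans_lt hy.1, hy.2⟩
  have hode := hsol.ode_fluid y hy'
  rw [deriv_sub_const, deriv_const_mul _ (hTf' y), div_mul_eq_mul_div, le_div_iff₀ ha]
  nlinarith [mul_le_mul_of_nonneg_left (hW y hy) (mul_pos hm hh).le]

theorem solid_sub_fluid_nonneg (hsol : IsTwoTemperatureSolution a b m h L Tf Ts)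
    (ha : 0 < a) (hb : 0 < b) (hm : 0 < m) (hh : 0 < h) (hL : 0 < L) {q : ℝ} (hq : 0 < q)
    (h0 : Tf 0 = Ts 0) (hLf : deriv Tf L = h / m * (Ts L - Tf L))
    (hLs : b * deriv Ts L = q - m * (Ts L - Tf L)) :
    ∀ y ∈ Icc 0 L, 0 ≤ Ts y - Tf y := by
  have hdiff : Differentiable ℝ (fun y ↦ Ts y - Tf y) :=
    (hsol.contDiff_solid.sub hsol.contDiff_fluid).differentiable two_ne_zero
  obtain ⟨y₀, hy₀, hmin⟩ :=
    isCompact_Icc.exists_isMinOn (nonempty_Icc.2 hL.le) hdiff.continuous.continuousOn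
  suffices 0 ≤ Ts y₀ - Tf y₀ from fun y hy ↦ this.trans (hmin hy)
  by_contra! hneg
  rcases hy₀.1.eq_or_lt with rfl | hpos
  · simp [h0] at hneg
  rcases hy₀.2.eq_or_lt with rfl | hlt
  · have hW' := hmin.deriv_nonpos_right hL (hdiff y₀)
    rw [hsol.deriv_solid_sub_fluid] at hW'
    have hTs' : 0 < deriv Ts y₀ := pos_of_mul_pos_right (by nlinarith) hb.le
    have hTf' : deriv Tf y₀ < 0 := hLf ▸ mul_neg_of_pos_of_neg (div_pos hh hm) hneg
    linarith
  · have hflux := hsol.fluid_deriv_le_of_isMinOn ha hb ⟨hpos, hlt⟩ hmin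
    have hanti := hsol.antitoneOn_exp_mul_fluid_deriv ha hm hh hpos.le (W₀ := Ts y₀ - Tf y₀)
      fun y hy ↦ hmin ⟨hpos.le.trans hy.1.le, hy.2.le⟩
    have hdecr := hanti ⟨le_rfl, hlt.le⟩ ⟨hlt.le, le_rfl⟩ hlt.le
    have hstart : m * deriv Tf y₀ - h * (Ts y₀ - Tf y₀) < 0 :=
      neg_of_mul_neg_right (hflux.trans_lt (mul_neg_of_pos_of_neg (mul_pos ha hh) hneg)) hb.le
    have hend : 0 ≤ m * deriv Tf L - h * (Ts y₀ - Tf y₀) := by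
      rw [hLf, ← mul_assoc, mul_div_cancel₀ _ hm.ne', ← mul_sub]
      exact mul_nonneg hh.le (sub_nonneg.2 (hmin ⟨hL.le, le_rfl⟩))
    linarith [mul_nonneg (Real.exp_pos (-(m / a * L))).le hend,
      mul_neg_of_pos_of_neg (Real.exp_pos (-(m / a * y₀))) hstart]

theorem fluid_deriv_nonneg (hsol : IsTwoTemperatureSolution a b m h L Tf Ts)
    (ha : 0 < a) (hm : 0 < m) (hh : 0 < h) (hW : ∀ y ∈ Icc 0 L, 0 ≤ Ts y - Tf y)
    (hTfL : 0 ≤ deriv Tf L) : ∀ y ∈ Icc 0 L, 0 ≤ deriv Tf y := by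
  intro y hy
  have hanti := hsol.antitoneOn_exp_mul_fluid_deriv ha hm hh le_rfl (W₀ := 0)
    fun y hy ↦ hW y (Ioo_subset_Icc_self hy)
  have := hanti hy ⟨hy.1.trans hy.2, le_rfl⟩ hy.2
  simp only [mul_zero, sub_zero] at this
  have hy' := (mul_nonneg (Real.exp_pos _).le (mul_nonneg hm.le hTfL)).trans this
  exact nonneg_of_mul_nonneg_right (nonneg_of_mul_nonneg_right hy' (Real.exp_pos _)) hm

theorem solid_deriv_nonneg (hsol : IsTwoTemperatureSolution a b m h L Tf Ts)
    (hb : 0 < b) (hh : 0 < h) (hL : 0 < L) (hW : ∀ y ∈ Icc 0 L, 0 ≤ Ts y - Tf y)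
    (h0 : Tf 0 = Ts 0) (hTf0 : 0 ≤ deriv Tf 0) : ∀ y ∈ Icc 0 L, 0 ≤ deriv Ts y := by
  have hmin : IsMinOn (fun y ↦ Ts y - Tf y) (Icc 0 L) 0 := fun y hy ↦ by
    simpa [h0] using hW y hy
  have hW' := hmin.deriv_nonneg_left hL
    ((hsol.contDiff_solid.sub hsol.contDiff_fluid).differentiable two_ne_zero 0)
  rw [hsol.deriv_solid_sub_fluid] at hW'
  have hmono : MonotoneOn (deriv Ts) (Icc 0 L) :=
    monotoneOn_of_deriv_nonneg (convex_Icc 0 L)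
      hsol.contDiff_solid.differentiable_deriv_two.continuous.continuousOn
      hsol.contDiff_solid.differentiable_deriv_two.differentiableOn fun y hy ↦ by
        rw [interior_Icc] at hy
        exact nonneg_of_mul_nonneg_right ((hsol.ode_solid y hy).symm ▸
          mul_nonneg hh.le (hW y (Ioo_subset_Icc_self hy))) hb
  exact fun y hy ↦ by linarith [hmono ⟨le_rfl, hL.le⟩ hy hy.1]

end IsTwoTemperatureSolution

theorem temp_monotone
    (phi kf ks cp mdot A hv Tb q L : ℝ)
    (hphi : 0 < phi) (hphi1 : phi < 1) (hkf : 0 < kf) (hks : 0 < ks)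
    (hcp : 0 < cp) (hm : 0 < mdot) (hA : 0 < A) (hhv : 0 < hv)
    (hL : 0 < L) (hq : 0 < q)
    (Tf Ts : ℝ → ℝ) (hTf : ContDiff ℝ 2 Tf) (hTs : ContDiff ℝ 2 Ts)
    (hodef : ∀ y ∈ Set.Ioo 0 L,
      -(phi * kf) * deriv (deriv Tf) y + (cp * mdot / A) * deriv Tf y
        = hv * (Ts y - Tf y))
    (hodes : ∀ y ∈ Set.Ioo 0 L,
      (1 - phi) * ks * deriv (deriv Ts) y = hv * (Ts y - Tf y))
    (hbc0f : Tf 0 = Tb) (hbc0s : Ts 0 = Tb)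
    (hbcLf : deriv Tf L = hv * A / (cp * mdot) * (Ts L - Tf L))
    (hbcLs : (1 - phi) * ks * deriv Ts L = q - cp * mdot / A * (Ts L - Tf L)) :
    MonotoneOn Tf (Set.Icc 0 L) ∧ MonotoneOn Ts (Set.Icc 0 L) ∧
    (∀ y ∈ Set.Icc 0 L, Tb ≤ Tf y) ∧ (∀ y ∈ Set.Icc 0 L, Tb ≤ Ts y) := by
  have ha : 0 < phi * kf := mul_pos hphi hkf
  have hb : 0 < (1 - phi) * ks := mul_pos (sub_pos.2 hphi1) hks
  have hmA : 0 < cp * mdot / A := by positivity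
  have hsol :
      IsTwoTemperatureSolution (phi * kf) ((1 - phi) * ks) (cp * mdot / A) hv L Tf Ts :=
    ⟨hTf, hTs, hodef, hodes⟩
  have h0 : Tf 0 = Ts 0 := hbc0f.trans hbc0s.symm
  have hLf : deriv Tf L = hv / (cp * mdot / A) * (Ts L - Tf L) := by
    rwa [div_div_eq_mul_div]
  have hW := hsol.solid_sub_fluid_nonneg ha hb hmA hhv hL hq h0 hLf hbcLs
  have hTf' := hsol.fluid_deriv_nonneg ha hmA hhv hW
    (hLf ▸ mul_nonneg (div_pos hhv hmA).le (hW L ⟨hL.le, le_rfl⟩))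
  have hTs' := hsol.solid_deriv_nonneg hb hhv hL hW h0 (hTf' 0 ⟨le_rfl, hL.le⟩)
  have hTf_mono := monotoneOn_of_deriv_nonneg_of_differentiable (convex_Icc 0 L)
    (hTf.differentiable two_ne_zero) hTf'
  have hTs_mono := monotoneOn_of_deriv_nonneg_of_differentiable (convex_Icc 0 L)
    (hTs.differentiable two_ne_zero) hTs'
  exact ⟨hTf_mono, hTs_mono, fun y hy ↦ hbc0f ▸ hTf_mono ⟨le_rfl, hL.le⟩ hy hy.1,
    fun y hy ↦ hbc0s ▸ hTs_mono ⟨le_rfl, hL.le⟩ hy hy.1⟩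
end

section
/- Under the same setting of the 1D temperature system with fluid heat conduction, if the hot-gas heat flux q equals 0, then the unique solution is the constant function pair T_f ≡ T_b, T_s ≡ T_b on [0, L]. -/
/-!
Write `f = T_f - T_b`, `s = T_s - T_b`. For `q = 0` the pair `(f, s)` solves a homogeneous linear
system with homogeneous boundary data, so it suffices to show that `(f, s)` and `(-f, -s)` are
both `≤ 0`: a weak maximum principle for the coupled system. At a positive maximum of `max f s`,
attained by `f` (resp. `s`), the coupling term `h (s - f)` has the sign that contradicts the
equation or the boundary condition at `L` satisfied by that component, once the inequalities are
made strict by subtracting the increasing concave barrier `ε (1 - exp (-y))` from both components.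
-/

open Set Real Filter Topology

theorem IsLocalMax.deriv_deriv_nonpos {f : ℝ → ℝ} {x : ℝ} (h : IsLocalMax f x)
    (hc : ContinuousAt f x) : deriv (deriv f) x ≤ 0 := by
  by_contra! hpos
  have hmin : IsLocalMin f x := isLocalMin_of_deriv_deriv_pos hpos h.deriv_eq_zero hc
  have hconst : f =ᶠ[𝓝 x] fun _ => f x := by
    filter_upwards [h, hmin] with y hmax hmin using le_antisymm hmax hmin
  have : deriv (deriv f) x = 0 := by
    rw [hconst.deriv.deriv_eq]
    simp
  exact hpos.ne' this

theorem IsLocalMaxOn.deriv_nonneg_of_right_endpoint {f : ℝ → ℝ} {a b : ℝ}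
    (h : IsLocalMaxOn f (Icc a b) b) (hab : a < b) (hf : DifferentiableAt ℝ f b) :
    0 ≤ deriv f b := by
  have hcone : a - b ∈ posTangentConeAt (Icc a b) b :=
    sub_mem_posTangentConeAt_of_segment_subset (by rw [segment_symm, segment_eq_Icc hab.le])
  have := h.hasFDerivWithinAt_nonpos hf.hasDerivAt.hasFDerivAt.hasFDerivWithinAt hcone
  exact nonneg_of_mul_nonpos_right (by simpa using this) (sub_neg.mpr hab)

theorem IsMaxOn.eq_left_or_deriv_conditions {g : ℝ → ℝ} {a b p : ℝ}
    (hg : Differentiable ℝ g) (hmax : IsMaxOn g (Icc a b) p) (hp : p ∈ Icc a b) :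
    p = a ∨ (p = b ∧ 0 ≤ deriv g b) ∨
      (p ∈ Ioo a b ∧ deriv g p = 0 ∧ deriv (deriv g) p ≤ 0) := by
  rcases hp.1.eq_or_lt with rfl | hap
  · exact Or.inl rfl
  rcases hp.2.eq_or_lt with rfl | hpb
  · exact Or.inr (Or.inl ⟨rfl, (hmax.localize).deriv_nonneg_of_right_endpoint hap (hg p)⟩)
  have hloc : IsLocalMax g p := hmax.isLocalMax (Icc_mem_nhds hap hpb)
  exact Or.inr (Or.inr ⟨⟨hap, hpb⟩, hloc.deriv_eq_zero,
    hloc.deriv_deriv_nonpos (hg p).continuousAt⟩)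

section MaximumPrinciple

variable {a b c h k m L : ℝ} {f s : ℝ → ℝ}

theorem nonpos_of_strict_subsolution (ha : 0 ≤ a) (hc : 0 ≤ c) (hh : 0 ≤ h) (hk : 0 ≤ k)
    (hm : 0 ≤ m) (hf : Differentiable ℝ f) (hs : Differentiable ℝ s)
    (odef : ∀ y ∈ Ioo 0 L, -a * deriv (deriv f) y + b * deriv f y < h * (s y - f y))
    (odes : ∀ y ∈ Ioo 0 L, h * (s y - f y) < c * deriv (deriv s) y)
    (h0f : f 0 ≤ 0) (h0s : s 0 ≤ 0)
    (hLf : deriv f L < k * (s L - f L)) (hLs : c * deriv s L < -(m * (s L - f L))) :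
    ∀ y ∈ Icc 0 L, f y ≤ 0 ∧ s y ≤ 0 := by
  intro y hy
  obtain ⟨p, hp, hpmax⟩ := isCompact_Icc.exists_isMaxOn ⟨y, hy⟩
    (hf.continuous.max hs.continuous).continuousOn
  suffices max (f p) (s p) ≤ 0 from max_le_iff.mp ((hpmax hy).trans this)
  rcases le_total (s p) (f p) with hsf | hfs
  · have hmax : IsMaxOn f (Icc 0 L) p := fun z hz =>
      (le_max_left _ _).trans ((hpmax hz).trans_eq (max_eq_left hsf))
    rw [max_eq_left hsf]
    rcases hmax.eq_left_or_deriv_conditions hf hp with rfl | ⟨rfl, hd⟩ | ⟨hpi, hd1, hd2⟩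
    · exact h0f
    · nlinarith
    · have := odef p hpi
      rw [hd1] at this
      nlinarith
  · have hmax : IsMaxOn s (Icc 0 L) p := fun z hz =>
      (le_max_right _ _).trans ((hpmax hz).trans_eq (max_eq_right hfs))
    rw [max_eq_right hfs]
    rcases hmax.eq_left_or_deriv_conditions hs hp with rfl | ⟨rfl, hd⟩ | ⟨hpi, -, hd2⟩
    · exact h0s
    · nlinarith
    · nlinarith [odes p hpi]

theorem deriv_sub_mul_one_sub_exp_neg {g : ℝ → ℝ} (hg : Differentiable ℝ g) (ε : ℝ) :
    deriv (fun y => g y - ε * (1 - exp (-y))) = fun y => deriv g y - ε * exp (-y) := by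
  funext y
  have := (hg y).hasDerivAt.sub (((hasDerivAt_neg y).exp.const_sub 1).const_mul ε)
  exact this.deriv.trans (by ring)

theorem deriv_sub_mul_exp_neg {g : ℝ → ℝ} (hg : Differentiable ℝ g) (ε : ℝ) :
    deriv (fun y => g y - ε * exp (-y)) = fun y => deriv g y + ε * exp (-y) := by
  funext y
  exact ((hg y).hasDerivAt.sub ((hasDerivAt_neg y).exp.const_mul ε)).deriv.trans (by ring)

theorem nonpos_of_subsolution (ha : 0 ≤ a) (hb : 0 < b) (hc : 0 < c) (hh : 0 ≤ h) (hk : 0 ≤ k)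
    (hm : 0 ≤ m) (hf : ContDiff ℝ 2 f) (hs : ContDiff ℝ 2 s)
    (odef : ∀ y ∈ Ioo 0 L, -a * deriv (deriv f) y + b * deriv f y ≤ h * (s y - f y))
    (odes : ∀ y ∈ Ioo 0 L, h * (s y - f y) ≤ c * deriv (deriv s) y)
    (h0f : f 0 ≤ 0) (h0s : s 0 ≤ 0)
    (hLf : deriv f L ≤ k * (s L - f L)) (hLs : c * deriv s L ≤ -(m * (s L - f L))) :
    ∀ y ∈ Icc 0 L, f y ≤ 0 ∧ s y ≤ 0 := by
  have hf1 : Differentiable ℝ f := hf.differentiable two_ne_zero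
  have hs1 : Differentiable ℝ s := hs.differentiable two_ne_zero
  have hf2 : Differentiable ℝ (deriv f) := (hf.iterate_deriv' 1 1).differentiable one_ne_zero
  have hs2 : Differentiable ℝ (deriv s) := (hs.iterate_deriv' 1 1).differentiable one_ne_zero
  intro y hy
  suffices ∀ ε > 0, f y ≤ ε ∧ s y ≤ ε from
    ⟨le_of_forall_pos_le_add fun ε hε => by simpa using (this ε hε).1,
      le_of_forall_pos_le_add fun ε hε => by simpa using (this ε hε).2⟩
  intro ε hε
  have hwε : ε * (1 - exp (-y)) ≤ ε := by nlinarith [exp_pos (-y)]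
  have hexp : ∀ z, 0 < ε * exp (-z) := fun z => mul_pos hε (exp_pos _)
  have key := nonpos_of_strict_subsolution (b := b) (f := fun y => f y - ε * (1 - exp (-y)))
    (s := fun y => s y - ε * (1 - exp (-y))) ha hc.le hh hk hm
    (hf1.sub (by fun_prop)) (hs1.sub (by fun_prop)) ?_ ?_ (by simpa using h0f) (by simpa using h0s)
    ?_ ?_ y hy
  · exact ⟨by linarith [key.1], by linarith [key.2]⟩
  all_goals simp only [deriv_sub_mul_one_sub_exp_neg hf1, deriv_sub_mul_one_sub_exp_neg hs1,
    deriv_sub_mul_exp_neg hf2, deriv_sub_mul_exp_neg hs2, sub_sub_sub_cancel_right]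
  · intro z hz
    nlinarith [odef z hz, hexp z]
  · intro z hz
    nlinarith [odes z hz, mul_pos hc (hexp z)]
  · linarith [hexp L]
  · nlinarith [mul_pos hc (hexp L)]

theorem eq_zero_of_solution (ha : 0 ≤ a) (hb : 0 < b) (hc : 0 < c) (hh : 0 ≤ h) (hk : 0 ≤ k)
    (hm : 0 ≤ m) (hf : ContDiff ℝ 2 f) (hs : ContDiff ℝ 2 s)
    (odef : ∀ y ∈ Ioo 0 L, -a * deriv (deriv f) y + b * deriv f y = h * (s y - f y))
    (odes : ∀ y ∈ Ioo 0 L, c * deriv (deriv s) y = h * (s y - f y))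
    (h0f : f 0 = 0) (h0s : s 0 = 0)
    (hLf : deriv f L = k * (s L - f L)) (hLs : c * deriv s L = -(m * (s L - f L))) :
    ∀ y ∈ Icc 0 L, f y = 0 ∧ s y = 0 := by
  intro y hy
  have upper := nonpos_of_subsolution ha hb hc hh hk hm hf hs (fun z hz => (odef z hz).le)
    (fun z hz => (odes z hz).ge) h0f.le h0s.le hLf.le hLs.le y hy
  have lower := nonpos_of_subsolution (f := -f) (s := -s) ha hb hc hh hk hm hf.neg hs.neg
    ?_ ?_ (by simp [h0f]) (by simp [h0s]) ?_ ?_ y hy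
  · simp only [Pi.neg_apply, neg_nonpos] at lower
    exact ⟨le_antisymm upper.1 lower.1, le_antisymm upper.2 lower.2⟩
  all_goals simp only [deriv.neg', deriv.fun_neg, Pi.neg_apply]
  · intro z hz; linarith [odef z hz]
  · intro z hz; linarith [odes z hz]
  · linarith
  · linarith

end MaximumPrinciple

theorem temp_constant_of_zero_flux_general
    (phi kf ks cp mdot A hv Tb q L : ℝ)
    (hphi : 0 < phi) (hphi1 : phi < 1) (hkf : 0 < kf) (hks : 0 < ks)
    (hcp : 0 < cp) (hm : 0 < mdot) (hA : 0 < A) (hhv : 0 < hv)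
    (hq : q = 0)
    (Tf Ts : ℝ → ℝ) (hTf : ContDiff ℝ 2 Tf) (hTs : ContDiff ℝ 2 Ts)
    (hodef : ∀ y ∈ Set.Ioo 0 L,
      -(phi * kf) * deriv (deriv Tf) y + (cp * mdot / A) * deriv Tf y
        = hv * (Ts y - Tf y))
    (hodes : ∀ y ∈ Set.Ioo 0 L,
      (1 - phi) * ks * deriv (deriv Ts) y = hv * (Ts y - Tf y))
    (hbc0f : Tf 0 = Tb) (hbc0s : Ts 0 = Tb)
    (hbcLf : deriv Tf L = hv * A / (cp * mdot) * (Ts L - Tf L))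
    (hbcLs : (1 - phi) * ks * deriv Ts L = q - cp * mdot / A * (Ts L - Tf L)) :
    ∀ y ∈ Set.Icc 0 L, Tf y = Tb ∧ Ts y = Tb := by
  have hb : 0 < cp * mdot / A := by positivity
  intro y hy
  refine (eq_zero_of_solution (f := (Tf · - Tb)) (s := (Ts · - Tb)) (k := hv * A / (cp * mdot))
    (mul_pos hphi hkf).le hb (mul_pos (sub_pos.2 hphi1) hks) hhv.le (by positivity) hb.le
    (hTf.sub contDiff_const) (hTs.sub contDiff_const) ?_ ?_ (sub_eq_zero.2 hbc0f)
    (sub_eq_zero.2 hbc0s) ?_ ?_ y hy).imp sub_eq_zero.1 sub_eq_zero.1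
  all_goals simp only [deriv_sub_const_fun, sub_sub_sub_cancel_right]
  · exact hodef
  · exact hodes
  · exact hbcLf
  · rw [hbcLs, hq, zero_sub]

theorem temp_constant_of_zero_flux
    (phi kf ks cp mdot A hv Tb q L : ℝ)
    (hphi : 0 < phi) (hphi1 : phi < 1) (hkf : 0 < kf) (hks : 0 < ks)
    (hcp : 0 < cp) (hm : 0 < mdot) (hA : 0 < A) (hhv : 0 < hv)
    (hL : 0 < L) (hq : q = 0)
    (Tf Ts : ℝ → ℝ) (hTf : ContDiff ℝ 2 Tf) (hTs : ContDiff ℝ 2 Ts)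
    (hodef : ∀ y ∈ Set.Ioo 0 L,
      -(phi * kf) * deriv (deriv Tf) y + (cp * mdot / A) * deriv Tf y
        = hv * (Ts y - Tf y))
    (hodes : ∀ y ∈ Set.Ioo 0 L,
      (1 - phi) * ks * deriv (deriv Ts) y = hv * (Ts y - Tf y))
    (hbc0f : Tf 0 = Tb) (hbc0s : Ts 0 = Tb)
    (hbcLf : deriv Tf L = hv * A / (cp * mdot) * (Ts L - Tf L))
    (hbcLs : (1 - phi) * ks * deriv Ts L = q - cp * mdot / A * (Ts L - Tf L)) :
    ∀ y ∈ Set.Icc 0 L, Tf y = Tb ∧ Ts y = Tb :=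
  temp_constant_of_zero_flux_general phi kf ks cp mdot A hv Tb q L hphi hphi1 hkf hks hcp hm hA hhv
    hq Tf Ts hTf hTs hodef hodes hbc0f hbc0s hbcLf hbcLs
end

section
/- Let ā, b̄ > 0 and define λ₊ = (−ā + √(ā² + 4b̄))/2 and λ₋ = (−ā − √(ā² + 4b̄))/2. For r̄ > 0 and L > 0, the functions T_f(y) = T_b − r̄ ā (λ₋ − λ₊ + λ₊ e^{λ₋ y} − λ₋ e^{λ₊ y})/(λ₊² e^{λ₋ L} − λ₋² e^{λ₊ L}) and T_s(y) = T_b + r̄ (λ₊² e^{λ₋ y} − λ₋² e^{λ₊ y} − (λ₋ − λ₊)ā)/(λ₊² e^{λ₋ L} − λ₋² e^{λ₊ L}) satisfy the ODE system T_f' = ā(T_s − T_f) and T_s'' = b̄(T_s − T_f) on (0, L), with T_f(0) = T_s(0) = T_b. -/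
lemma exp_mul_hasDerivAt (c y : ℝ) :
    HasDerivAt (fun y => Real.exp (c * y)) (c * Real.exp (c * y)) y := by
  have h := (Real.hasDerivAt_exp (c * y)).comp y ((hasDerivAt_id y).const_mul c)
  simpa [mul_comm, Function.comp_def] using h

theorem simplified_temp_explicit_solution
    (abar bbar rbar Tb L : ℝ) (ha : 0 < abar) (hb : 0 < bbar) (hr : 0 < rbar) (hL : 0 < L) :
    let lp : ℝ := (-abar + Real.sqrt (abar ^ 2 + 4 * bbar)) / 2
    let lm : ℝ := (-abar - Real.sqrt (abar ^ 2 + 4 * bbar)) / 2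
    let den : ℝ := lp ^ 2 * Real.exp (lm * L) - lm ^ 2 * Real.exp (lp * L)
    let Tf : ℝ → ℝ := fun y =>
      Tb - rbar * abar * (lm - lp + lp * Real.exp (lm * y) - lm * Real.exp (lp * y)) / den
    let Ts : ℝ → ℝ := fun y =>
      Tb + rbar * (lp ^ 2 * Real.exp (lm * y) - lm ^ 2 * Real.exp (lp * y) - (lm - lp) * abar) / den
    (∀ y ∈ Set.Ioo 0 L, deriv Tf y = abar * (Ts y - Tf y)) ∧
    (∀ y ∈ Set.Ioo 0 L, deriv (deriv Ts) y = bbar * (Ts y - Tf y)) ∧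
    Tf 0 = Tb ∧ Ts 0 = Tb := by
  intro lp lm den Tf Ts
  have hs : Real.sqrt (abar ^ 2 + 4 * bbar) ^ 2 = abar ^ 2 + 4 * bbar := by
    rw [Real.sq_sqrt]; positivity
  have hsum : lp + lm = -abar := by show _ = _; ring
  have hprod : lp * lm = -bbar := by
    show (-abar + Real.sqrt (abar ^ 2 + 4 * bbar)) / 2 *
        ((-abar - Real.sqrt (abar ^ 2 + 4 * bbar)) / 2) = -bbar
    nlinarith [hs]
  have hTfdef : Tf = fun y =>
      Tb - rbar * abar * (lm - lp + lp * Real.exp (lm * y) - lm * Real.exp (lp * y)) / den := rfl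
  have hTsdef : Ts = fun y =>
      Tb + rbar * (lp ^ 2 * Real.exp (lm * y) - lm ^ 2 * Real.exp (lp * y) - (lm - lp) * abar) / den := rfl
  clear_value lp lm den Tf Ts
  have hlp : lp ^ 2 = bbar - abar * lp := by linear_combination lp * hsum - hprod
  have hlm : lm ^ 2 = bbar - abar * lm := by linear_combination lm * hsum - hprod
  have hTf : ∀ y : ℝ, HasDerivAt Tf
      (-(rbar * abar * (lp * (lm * Real.exp (lm * y)) - lm * (lp * Real.exp (lp * y))) / den)) y := by
    intro y
    rw [hTfdef]
    exact (((((exp_mul_hasDerivAt lm y).const_mul lp).const_add (lm - lp)).sub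
      ((exp_mul_hasDerivAt lp y).const_mul lm)).const_mul (rbar * abar)).div_const den |>.const_sub Tb
  have hTs : ∀ y : ℝ, HasDerivAt Ts
      (rbar * (lp ^ 2 * (lm * Real.exp (lm * y)) - lm ^ 2 * (lp * Real.exp (lp * y))) / den) y := by
    intro y
    rw [hTsdef]
    exact (((((exp_mul_hasDerivAt lm y).const_mul (lp ^ 2)).sub
      ((exp_mul_hasDerivAt lp y).const_mul (lm ^ 2))).sub_const ((lm - lp) * abar)).const_mul
      rbar).div_const den |>.const_add Tb
  have hdTs : deriv Ts = fun y =>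
      rbar * (lp ^ 2 * (lm * Real.exp (lm * y)) - lm ^ 2 * (lp * Real.exp (lp * y))) / den := by
    funext y; exact (hTs y).deriv
  have hdiff : ∀ y : ℝ, Ts y - Tf y = rbar * bbar * (Real.exp (lm * y) - Real.exp (lp * y)) / den := by
    intro y
    rw [hTfdef, hTsdef]
    simp only
    linear_combination (rbar * Real.exp (lm * y) / den) * hlp -
      (rbar * Real.exp (lp * y) / den) * hlm
  refine ⟨?_, ?_, ?_, ?_⟩
  · intro y _
    rw [(hTf y).deriv, hdiff y]
    linear_combination (rbar * abar * (Real.exp (lp * y) - Real.exp (lm * y)) / den) * hprod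
  · intro y _
    have hd2 : HasDerivAt (deriv Ts)
        (rbar * (lp ^ 2 * (lm * (lm * Real.exp (lm * y))) -
          lm ^ 2 * (lp * (lp * Real.exp (lp * y)))) / den) y := by
      rw [hdTs]
      exact (((((exp_mul_hasDerivAt lm y).const_mul lm).const_mul (lp ^ 2)).sub
        (((exp_mul_hasDerivAt lp y).const_mul lp).const_mul (lm ^ 2))).const_mul
        rbar).div_const den
    rw [hd2.deriv, hdiff y]
    linear_combination (rbar * (Real.exp (lm * y) - Real.exp (lp * y)) * (lp * lm - bbar) / den) * hprod
  · rw [hTfdef]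
    simp only [mul_zero, Real.exp_zero]
    rw [show lm - lp + lp * 1 - lm * 1 = 0 by ring]
    simp
  · rw [hTsdef]
    simp only [mul_zero, Real.exp_zero]
    rw [show lp ^ 2 * 1 - lm ^ 2 * 1 - (lm - lp) * abar = (lp - lm) * (lp + lm + abar) by ring,
      show lp + lm + abar = 0 by linarith [hsum]]
    simp
end
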